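/- arXiv:2110.11945 — 10 statements merged into one kernel-verified Lean document; each statement's English description precedes it below -/
import Mathlib

section
/- Let A be a nonzero m×m real symmetric positive semidefinite matrix with Moore–Penrose inverse A†, let α be a real scalar, and define the Newton–Raphson iterates A₀ = α A, A_{k+1} = 2 A_k − A_k A A_k. If the spectral norm satisfies ‖A A† − α A²‖ < 1, then the sequence A_k converges to A† (i.e. ‖A_k − A†‖ → 0 as k → ∞). -/
/-!
With `F_k = A (A† - A_k)`, the Penrose equations make the iteration invariant in the sense
`A_k A A† = A_k = A† A A_k`, which turns one Newton step into
`A† - A_{k+1} = (A† - A_k) A (A† - A_k)`. Hence `F_{k+1} = F_k²`, so `F_k = F_0 ^ 2 ^ k`, and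
`A† - A_k = A† F_k`. Since `F_0 = A A† - α A²` has spectral norm `r < 1`, the error is at most
`‖A†‖ r ^ 2 ^ k`.
-/

open Matrix Filter

/-- The spectral norm (ℓ²-operator norm) of a real square matrix. -/
noncomputable def specNorm {m : ℕ} (M : Matrix (Fin m) (Fin m) ℝ) : ℝ :=
  ‖Matrix.toEuclideanCLM (𝕜 := ℝ) M‖

/-- `Ad` is the Moore–Penrose inverse of `A`: the Penrose equations
`A Ad A = A`, `Ad A Ad = Ad`, `(A Ad)ᵀ = A Ad`, `(Ad A)ᵀ = Ad A`. -/
def IsMoorePenroseInv {m n : ℕ} (A : Matrix (Fin m) (Fin n) ℝ)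
    (Ad : Matrix (Fin n) (Fin m) ℝ) : Prop :=
  A * Ad * A = A ∧ Ad * A * Ad = Ad ∧ (A * Ad)ᵀ = A * Ad ∧ (Ad * A)ᵀ = Ad * A

section NewtonIteration

variable {R : Type*} [Ring R] {a b : R} {x : ℕ → R}

theorem newton_mul_mul_eq_self (hx : ∀ k, x (k + 1) = 2 * x k - x k * a * x k)
    (h0 : x 0 * (a * b) = x 0) (k : ℕ) : x k * (a * b) = x k := by
  induction k with
  | zero => exact h0
  | succ k ih => simp only [hx k, sub_mul, mul_assoc, ih]

theorem mul_mul_newton_eq_self (hx : ∀ k, x (k + 1) = 2 * x k - x k * a * x k)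
    (h0 : b * (a * x 0) = x 0) (k : ℕ) : b * (a * x k) = x k := by
  induction k with
  | zero => exact h0
  | succ k ih =>
    have ih' : b * a * x k = x k := by rw [mul_assoc, ih]
    simp only [hx k, two_mul, mul_add, mul_sub, ← mul_assoc, ih']

theorem sub_newton_step_eq {y : R} (hbab : b * a * b = b) (hr : y * (a * b) = y)
    (hl : b * (a * y) = y) : b - (2 * y - y * a * y) = (b - y) * a * (b - y) := by
  simp only [mul_sub, sub_mul, mul_assoc, hr, hl, two_mul]
  rw [← mul_assoc b, hbab]
  abel

variable (hbab : b * a * b = b) (hx : ∀ k, x (k + 1) = 2 * x k - x k * a * x k)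
  (hr : x 0 * (a * b) = x 0) (hl : b * (a * x 0) = x 0)
include hbab hx hr hl

theorem mul_sub_newton_eq_pow (k : ℕ) : a * (b - x k) = (a * (b - x 0)) ^ 2 ^ k := by
  induction k with
  | zero => rw [pow_zero, pow_one]
  | succ k ih =>
    rw [hx k,
      sub_newton_step_eq hbab (newton_mul_mul_eq_self hx hr k) (mul_mul_newton_eq_self hx hl k),
      pow_succ, pow_mul, sq, ← ih]
    simp only [mul_assoc]

theorem sub_newton_eq_mul_pow (k : ℕ) : b - x k = b * (a * (b - x 0)) ^ 2 ^ k := by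
  rw [← mul_sub_newton_eq_pow hbab hx hr hl, mul_sub, mul_sub, ← mul_assoc, hbab,
    mul_mul_newton_eq_self hx hl k]

end NewtonIteration

theorem specNorm_mul_le {m : ℕ} (M N : Matrix (Fin m) (Fin m) ℝ) :
    specNorm (M * N) ≤ specNorm M * specNorm N := by
  simpa only [specNorm, map_mul] using norm_mul_le _ _

theorem specNorm_pow_le {m n : ℕ} (M : Matrix (Fin m) (Fin m) ℝ) (hn : 0 < n) :
    specNorm (M ^ n) ≤ specNorm M ^ n := by
  simpa only [specNorm, map_pow] using norm_pow_le' _ hn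

theorem specNorm_sub_comm {m : ℕ} (M N : Matrix (Fin m) (Fin m) ℝ) :
    specNorm (M - N) = specNorm (N - M) := by
  simp only [specNorm, map_sub, norm_sub_rev]

namespace IsMoorePenroseInv

variable {n : ℕ} {A Ad : Matrix (Fin n) (Fin n) ℝ}

theorem self_mul_self_mul_eq (h : IsMoorePenroseInv A Ad) (hA : Aᵀ = A) : A * A * Ad = A := by
  obtain ⟨h1, -, h3, -⟩ := h
  calc A * A * Ad = Aᵀ * (A * Ad)ᵀ := by rw [hA, h3, mul_assoc]
    _ = A := by rw [← transpose_mul, h1, hA]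

theorem mul_self_mul_self_eq (h : IsMoorePenroseInv A Ad) (hA : Aᵀ = A) : Ad * A * A = A := by
  obtain ⟨h1, -, -, h4⟩ := h
  calc Ad * A * A = (Ad * A)ᵀ * Aᵀ := by rw [hA, h4]
    _ = A := by rw [← transpose_mul, ← mul_assoc, h1, hA]

end IsMoorePenroseInv

theorem newton_raphson_tendsto_moorePenroseInv_general {m : ℕ}
    (A Ad : Matrix (Fin m) (Fin m) ℝ)
    (hA : A.PosSemidef)
    (hMP : IsMoorePenroseInv A Ad)
    (α : ℝ) (N : ℕ → Matrix (Fin m) (Fin m) ℝ)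
    (hN0 : N 0 = α • A)
    (hNrec : ∀ k, N (k + 1) = (2 : ℝ) • N k - N k * A * N k)
    (hinit : specNorm (A * Ad - α • (A * A)) < 1) :
    Tendsto (fun k => specNorm (N k - Ad)) atTop (nhds 0) := by
  have hAt : Aᵀ = A := by simpa using hA.isHermitian.eq
  have hx : ∀ k, N (k + 1) = 2 * N k - N k * A * N k := fun k => by
    rw [hNrec, two_smul, two_mul]
  have hr : N 0 * (A * Ad) = N 0 := by
    rw [hN0, smul_mul_assoc, ← mul_assoc, hMP.self_mul_self_mul_eq hAt]
  have hl : Ad * (A * N 0) = N 0 := by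
    rw [hN0, mul_smul_comm, mul_smul_comm, ← mul_assoc, hMP.mul_self_mul_self_eq hAt]
  have hF0 : A * (Ad - N 0) = A * Ad - α • (A * A) := by rw [hN0, mul_sub, mul_smul_comm]
  set r := specNorm (A * Ad - α • (A * A))
  have hbound : ∀ k, specNorm (N k - Ad) ≤ specNorm Ad * r ^ 2 ^ k := fun k =>
    calc specNorm (N k - Ad) = specNorm (Ad * (A * Ad - α • (A * A)) ^ 2 ^ k) := by
          rw [specNorm_sub_comm, sub_newton_eq_mul_pow hMP.2.1 hx hr hl, hF0]
      _ ≤ specNorm Ad * r ^ 2 ^ k := (specNorm_mul_le _ _).trans <|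
          mul_le_mul_of_nonneg_left (specNorm_pow_le _ (by positivity)) (norm_nonneg _)
  have hdecay : Tendsto (fun k : ℕ => r ^ 2 ^ k) atTop (nhds 0) :=
    (tendsto_pow_atTop_nhds_zero_of_lt_one (norm_nonneg _) hinit).comp
      (tendsto_pow_atTop_atTop_of_one_lt one_lt_two)
  exact squeeze_zero (fun k => norm_nonneg _) hbound (by simpa using hdecay.const_mul (specNorm Ad))

/-- If `A` is a nonzero real symmetric positive semidefinite matrix with
Moore–Penrose inverse `Ad`, the Newton–Raphson iterates are `N 0 = α • A`,
`N (k+1) = 2 N k - N k A N k`, and the spectral norm satisfies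
`‖A Ad - α A²‖ < 1`, then `N k` converges to `Ad`. -/
theorem newton_raphson_tendsto_moorePenroseInv {m : ℕ}
    (A Ad : Matrix (Fin m) (Fin m) ℝ)
    (hA : A.PosSemidef) (hA0 : A ≠ 0)
    (hMP : IsMoorePenroseInv A Ad)
    (α : ℝ) (N : ℕ → Matrix (Fin m) (Fin m) ℝ)
    (hN0 : N 0 = α • A)
    (hNrec : ∀ k, N (k + 1) = (2 : ℝ) • N k - N k * A * N k)
    (hinit : specNorm (A * Ad - α • (A * A)) < 1) :
    Tendsto (fun k => specNorm (N k - Ad)) atTop (nhds 0) :=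
  newton_raphson_tendsto_moorePenroseInv_general A Ad hA hMP α N hN0 hNrec hinit
end

section
/- Let A be an m×m real symmetric positive semidefinite matrix with Moore–Penrose inverse A†, let α be a real scalar with ‖A A† − α A²‖ < 1 in spectral norm, and define the Newton–Raphson iterates A₀ = α A, A_{k+1} = 2 A_k − A_k A A_k. Then the sequence of residuals ‖A A_k A − A‖ is monotonically nonincreasing in k and converges to 0. -/
open Matrix Filter

/-!
With `P = A A†`, the Newton–Raphson step squares the error `G_k = P - A N_k`, so
`G_k = G_0 ^ (2 ^ k)`, while the residual is `A - A N_k A = G_k A`. Hence the residual is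
multiplied by the contraction `G_k` at every step, and it tends to `0` as `‖G_0‖ < 1`.
Symmetry of `A` gives `A P = A`, which keeps every iterate in the range: `N_k P = N_k`.
-/

section Ring

variable {R : Type*} [Ring R] {a p n : R}

theorem newton_step_mul_eq_self (hnp : n * p = n) :
    (2 * n - n * a * n) * p = 2 * n - n * a * n := by
  rw [sub_mul, mul_assoc 2, hnp, mul_assoc (n * a), hnp]

theorem sub_mul_newton_step_eq_mul_self (hp : IsIdempotentElem p) (hpa : p * a = a)
    (hnp : n * p = n) :
    p - a * (2 * n - n * a * n) = (p - a * n) * (p - a * n) := by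
  have hpan : p * (a * n) = a * n := by rw [← mul_assoc, hpa]
  have hanp : a * n * p = a * n := by rw [mul_assoc, hnp]
  have hsq : (p - a * n) * (p - a * n) = p - a * n - a * n + a * n * (a * n) := by
    rw [sub_mul, mul_sub, mul_sub, hp.eq, hpan, hanp]
    abel
  rw [hsq]
  noncomm_ring

end Ring

section Squaring

theorem eq_pow_two_pow_of_eq_mul_self {M : Type*} [Monoid M] {g : ℕ → M}
    (hg : ∀ k, g (k + 1) = g k * g k) (k : ℕ) : g k = g 0 ^ 2 ^ k := by
  induction k with
  | zero => rw [pow_zero, pow_one]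
  | succ k ih => rw [hg, ih, ← pow_add, ← two_mul, pow_succ']

variable {R : Type*} [NormedRing R] {g : ℕ → R}

theorem norm_le_one_of_eq_mul_self (hg : ∀ k, g (k + 1) = g k * g k) (h0 : ‖g 0‖ ≤ 1)
    (k : ℕ) : ‖g k‖ ≤ 1 := by
  rw [eq_pow_two_pow_of_eq_mul_self hg]
  exact (norm_pow_le' _ (by positivity)).trans (pow_le_one₀ (norm_nonneg _) h0)

theorem antitone_norm_mul_of_eq_mul_self (hg : ∀ k, g (k + 1) = g k * g k)
    (h0 : ‖g 0‖ ≤ 1) (b : R) : Antitone fun k => ‖g k * b‖ :=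
  antitone_nat_of_succ_le fun k =>
    calc ‖g (k + 1) * b‖ = ‖g k * (g k * b)‖ := by rw [hg, mul_assoc]
      _ ≤ ‖g k‖ * ‖g k * b‖ := norm_mul_le _ _
      _ ≤ ‖g k * b‖ :=
        mul_le_of_le_one_left (norm_nonneg _) (norm_le_one_of_eq_mul_self hg h0 k)

theorem tendsto_norm_mul_of_eq_mul_self (hg : ∀ k, g (k + 1) = g k * g k)
    (h0 : ‖g 0‖ < 1) (b : R) : Tendsto (fun k => ‖g k * b‖) atTop (nhds 0) := by
  have hg_zero : Tendsto g atTop (nhds 0) := by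
    refine ((tendsto_pow_atTop_nhds_zero_of_norm_lt_one h0).comp
      (tendsto_pow_atTop_atTop_of_one_lt one_lt_two)).congr fun k => ?_
    exact (eq_pow_two_pow_of_eq_mul_self hg k).symm
  simpa using (hg_zero.mul_const b).norm

end Squaring

theorem IsMoorePenroseInv.isIdempotentElem_mul {m n : ℕ} {A : Matrix (Fin m) (Fin n) ℝ}
    {Ad : Matrix (Fin n) (Fin m) ℝ} (h : IsMoorePenroseInv A Ad) :
    IsIdempotentElem (A * Ad) := by
  rw [IsIdempotentElem, ← Matrix.mul_assoc, h.1]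

theorem IsMoorePenroseInv.mul_mul_eq_self {m : ℕ} {A Ad : Matrix (Fin m) (Fin m) ℝ}
    (hA : A.IsSymm) (h : IsMoorePenroseInv A Ad) : A * (A * Ad) = A := by
  calc A * (A * Ad) = Aᵀ * (A * Ad)ᵀ := by rw [hA.eq, h.2.2.1]
    _ = (A * Ad * A)ᵀ := (transpose_mul _ _).symm
    _ = A := by rw [h.1, hA.eq]

/-- Under the contraction condition `‖A Ad - α A²‖ < 1`, the residuals
`‖A N_k A - A‖` are monotonically nonincreasing in `k` and converge to `0`. -/
theorem newton_raphson_residual_antitone_tendsto_zero {m : ℕ}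
    (A Ad : Matrix (Fin m) (Fin m) ℝ)
    (hA : A.PosSemidef)
    (hMP : IsMoorePenroseInv A Ad)
    (α : ℝ) (N : ℕ → Matrix (Fin m) (Fin m) ℝ)
    (hN0 : N 0 = α • A)
    (hNrec : ∀ k, N (k + 1) = (2 : ℝ) • N k - N k * A * N k)
    (hinit : specNorm (A * Ad - α • (A * A)) < 1) :
    Antitone (fun k => specNorm (A * N k * A - A)) ∧
      Tendsto (fun k => specNorm (A * N k * A - A)) atTop (nhds 0) := by
  set P := A * Ad
  have hAP : A * P = A := hMP.mul_mul_eq_self hA.1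
  have hNrec' : ∀ k, N (k + 1) = 2 * N k - N k * A * N k := by
    simpa only [two_smul, two_mul] using hNrec
  have hNP : ∀ k, N k * P = N k := fun k => by
    induction k with
    | zero => rw [hN0, smul_mul_assoc, hAP]
    | succ k ih => rw [hNrec', newton_step_mul_eq_self ih]
  let g k := toEuclideanCLM (𝕜 := ℝ) (P - A * N k)
  have hg : ∀ k, g (k + 1) = g k * g k := fun k => by
    simp only [g]
    rw [hNrec', sub_mul_newton_step_eq_mul_self hMP.isIdempotentElem_mul hMP.1 (hNP k), map_mul]
  have hres : (fun k => specNorm (A * N k * A - A)) =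
      fun k => ‖g k * toEuclideanCLM (𝕜 := ℝ) A‖ := by
    ext k
    rw [specNorm, ← norm_neg, ← map_neg, neg_sub, ← map_mul, sub_mul, hMP.1]
  have h0 : ‖g 0‖ < 1 := by simpa only [g, hN0, mul_smul_comm, specNorm] using hinit
  rw [hres]
  exact ⟨antitone_norm_mul_of_eq_mul_self hg h0.le _, tendsto_norm_mul_of_eq_mul_self hg h0 _⟩
end

section
/- Let A be an m×m real symmetric positive semidefinite matrix with Moore–Penrose inverse A†, let α be a real scalar with ‖A A† − α A²‖ < 1 in spectral norm, and define the Newton–Raphson iterates A₀ = α A, A_{k+1} = 2 A_k − A_k A A_k. Then the sequence ‖A_k − A†‖ is monotonically nonincreasing in k and converges to 0. -/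
open Matrix Filter

/-!
For a symmetric `A` the Penrose equations force `A A† = A† A`, and then every iterate `N` satisfies
`A† A N = N = N A A†`. With these, one Newton step squares the error,
`A† - N_{k+1} = (N_k - A†) A (N_k - A†)`, so the residual `A (N_k - A†)` satisfies
`‖A (N_{k+1} - A†)‖ ≤ ‖A (N_k - A†)‖²`. Its norm therefore never exceeds its initial value
`c = ‖A A† - α A²‖ < 1`, and `‖N_{k+1} - A†‖ ≤ c ‖N_k - A†‖`.
-/

open Topology

theorem IsMoorePenroseInv.mul_comm_of_transpose_eq {m : ℕ} {A Ad : Matrix (Fin m) (Fin m) ℝ}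
    (hMP : IsMoorePenroseInv A Ad) (hA : Aᵀ = A) : A * Ad = Ad * A := by
  obtain ⟨h1, -, h3, h4⟩ := hMP
  rw [transpose_mul, hA] at h3 h4
  have h1t : A * Adᵀ * A = A := by
    simpa only [transpose_mul, hA, Matrix.mul_assoc] using congrArg transpose h1
  have hleft : Ad * A * A = A := by rwa [h4] at h1t
  have hright : A * (A * Ad) = A := by rwa [Matrix.mul_assoc, h3] at h1t
  calc A * Ad = Ad * A * A * Ad := by rw [hleft]
    _ = Ad * (A * (A * Ad)) := by simp only [Matrix.mul_assoc]
    _ = Ad * A := by rw [hright]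

section Ring

variable {R : Type*} [Ring R] {a d n : R}

def newtonStep (a n : R) : R := 2 * n - n * a * n

theorem mul_newtonStep_of_mul_eq (h : d * a * n = n) :
    d * a * newtonStep a n = newtonStep a n := by
  calc d * a * newtonStep a n = 2 * (d * a * n) - d * a * n * a * n := by
        unfold newtonStep; noncomm_ring
    _ = newtonStep a n := by rw [h, newtonStep]

theorem newtonStep_mul_of_mul_eq (h : n * a * d = n) :
    newtonStep a n * a * d = newtonStep a n := by
  calc newtonStep a n * a * d = 2 * (n * a * d) - n * a * (n * a * d) := by
        unfold newtonStep; noncomm_ring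
    _ = newtonStep a n := by rw [h, newtonStep]

theorem sub_newtonStep (hd : d * a * d = d) (hl : d * a * n = n) (hr : n * a * d = n) :
    d - newtonStep a n = (n - d) * a * (n - d) := by
  calc d - newtonStep a n = n * a * n - n * a * d - d * a * n + d * a * d := by
        rw [hl, hr, hd, newtonStep]; noncomm_ring
    _ = (n - d) * a * (n - d) := by noncomm_ring

end Ring

theorem le_of_succ_le_mul_self {r : ℕ → ℝ} (hr : ∀ k, 0 ≤ r k) (h0 : r 0 ≤ 1)
    (h : ∀ k, r (k + 1) ≤ r k * r k) (k : ℕ) : r k ≤ r 0 := by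
  induction k with
  | zero => rfl
  | succ k ih =>
    calc r (k + 1) ≤ r k * r k := h k
      _ ≤ r 0 * 1 := mul_le_mul ih (ih.trans h0) (hr k) (hr 0)
      _ = r 0 := mul_one _

theorem antitone_and_tendsto_zero_of_succ_le_mul {e : ℕ → ℝ} {c : ℝ} (he : ∀ k, 0 ≤ e k)
    (hc0 : 0 ≤ c) (hc1 : c < 1) (h : ∀ k, e (k + 1) ≤ c * e k) :
    Antitone e ∧ Tendsto e atTop (𝓝 0) := by
  refine ⟨antitone_nat_of_succ_le fun k => (h k).trans (mul_le_of_le_one_left (he k) hc1.le), ?_⟩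
  have hgeom : Tendsto (fun k => c ^ k * e 0) atTop (𝓝 0) := by
    simpa using (tendsto_pow_atTop_nhds_zero_of_lt_one hc0 hc1).mul_const (e 0)
  exact squeeze_zero he (fun k => le_geom hc0 k fun j _ => h j) hgeom

section SeminormedRing

variable {R : Type*} [SeminormedRing R] {a d : R}

theorem newton_error_antitone_tendsto_zero {n : ℕ → R} (hd : d * a * d = d)
    (hl : d * a * n 0 = n 0) (hr : n 0 * a * d = n 0) (hrec : ∀ k, n (k + 1) = newtonStep a (n k))
    (hres : ‖a * (n 0 - d)‖ < 1) :
    Antitone (fun k => ‖n k - d‖) ∧ Tendsto (fun k => ‖n k - d‖) atTop (𝓝 0) := by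
  have hcorner : ∀ k, d * a * n k = n k ∧ n k * a * d = n k := by
    intro k
    induction k with
    | zero => exact ⟨hl, hr⟩
    | succ k ih =>
      rw [hrec]
      exact ⟨mul_newtonStep_of_mul_eq ih.1, newtonStep_mul_of_mul_eq ih.2⟩
  have hsq : ∀ k, n (k + 1) - d = -((n k - d) * a * (n k - d)) := fun k => by
    rw [hrec, ← sub_newtonStep hd (hcorner k).1 (hcorner k).2, neg_sub]
  have hres_succ : ∀ k, ‖a * (n (k + 1) - d)‖ ≤ ‖a * (n k - d)‖ * ‖a * (n k - d)‖ := fun k => by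
    rw [hsq, mul_neg, norm_neg, show a * ((n k - d) * a * (n k - d)) =
      a * (n k - d) * (a * (n k - d)) by simp only [mul_assoc]]
    exact norm_mul_le _ _
  have hres_le : ∀ k, ‖a * (n k - d)‖ ≤ ‖a * (n 0 - d)‖ :=
    le_of_succ_le_mul_self (fun _ => norm_nonneg _) hres.le hres_succ
  refine antitone_and_tendsto_zero_of_succ_le_mul (fun _ => norm_nonneg _) (norm_nonneg _) hres
    fun k => ?_
  calc ‖n (k + 1) - d‖ = ‖(n k - d) * (a * (n k - d))‖ := by
        rw [hsq, norm_neg, mul_assoc]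
    _ ≤ ‖n k - d‖ * ‖a * (n k - d)‖ := norm_mul_le _ _
    _ ≤ ‖n k - d‖ * ‖a * (n 0 - d)‖ := mul_le_mul_of_nonneg_left (hres_le k) (norm_nonneg _)
    _ = ‖a * (n 0 - d)‖ * ‖n k - d‖ := mul_comm _ _

end SeminormedRing

open scoped Matrix.Norms.L2Operator in
/-- Under the contraction condition `‖A Ad - α A²‖ < 1`, the errors
`‖N_k - Ad‖` are monotonically nonincreasing in `k` and converge to `0`. -/
theorem newton_raphson_error_antitone_tendsto_zero {m : ℕ}
    (A Ad : Matrix (Fin m) (Fin m) ℝ)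
    (hA : A.PosSemidef)
    (hMP : IsMoorePenroseInv A Ad)
    (α : ℝ) (N : ℕ → Matrix (Fin m) (Fin m) ℝ)
    (hN0 : N 0 = α • A)
    (hNrec : ∀ k, N (k + 1) = (2 : ℝ) • N k - N k * A * N k)
    (hinit : specNorm (A * Ad - α • (A * A)) < 1) :
    Antitone (fun k => specNorm (N k - Ad)) ∧
      Tendsto (fun k => specNorm (N k - Ad)) atTop (nhds 0) := by
  have hAt : Aᵀ = A := by
    simpa only [conjTranspose_eq_transpose_of_trivial] using hA.isHermitian.eq
  have hcomm : A * Ad = Ad * A := hMP.mul_comm_of_transpose_eq hAt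
  obtain ⟨h1, h2, -, -⟩ := hMP
  have hspec : ∀ M : Matrix (Fin m) (Fin m) ℝ, specNorm M = ‖M‖ := fun _ => rfl
  have hl : Ad * A * N 0 = N 0 := by rw [hN0, Matrix.mul_smul, ← hcomm, h1]
  have hr : N 0 * A * Ad = N 0 := by
    rw [hN0, Matrix.smul_mul, Matrix.smul_mul, Matrix.mul_assoc, hcomm, ← Matrix.mul_assoc, h1]
  have hrec : ∀ k, N (k + 1) = newtonStep A (N k) := fun k => by
    rw [hNrec, newtonStep, two_smul, two_mul]
  have hres : ‖A * (N 0 - Ad)‖ < 1 := by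
    rwa [hN0, ← norm_neg, ← mul_neg, neg_sub, mul_sub, Matrix.mul_smul, ← hspec]
  simpa only [hspec] using newton_error_antitone_tendsto_zero h2 hl hr hrec hres
end

section
/- Let A be an m×m real symmetric positive semidefinite matrix with Moore–Penrose inverse A†, let α be a real scalar, and define the Newton–Raphson iterates A₀ = α A, A_{k+1} = 2 A_k − A_k A A_k. Then for every k ≥ 0 the error satisfies the exact recursion A† − A_{k+1} = (A† − A_k) A (A† − A_k). -/
open Matrix Filter

/-- The Newton–Raphson error satisfies the exact recursion
`Ad - N_{k+1} = (Ad - N_k) A (Ad - N_k)`. -/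
theorem newton_raphson_error_recursion {m : ℕ}
    (A Ad : Matrix (Fin m) (Fin m) ℝ)
    (hA : A.PosSemidef)
    (hMP : IsMoorePenroseInv A Ad)
    (α : ℝ) (N : ℕ → Matrix (Fin m) (Fin m) ℝ)
    (hN0 : N 0 = α • A)
    (hNrec : ∀ k, N (k + 1) = (2 : ℝ) • N k - N k * A * N k) :
    ∀ k, Ad - N (k + 1) = (Ad - N k) * A * (Ad - N k) := by
  obtain ⟨h1, h2, h3, h4⟩ := hMP
  have hAsym : Aᵀ = A := hA.1.eq
  -- A Adᵀ A = A (transpose of first Penrose eq)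
  have h1t : A * Adᵀ * A = A := by
    have := congrArg Matrix.transpose h1
    simpa [Matrix.transpose_mul, hAsym, Matrix.mul_assoc] using this
  -- Ad A A = A
  have hAdAA : Ad * A * A = A := by
    calc Ad * A * A = (Ad * A)ᵀ * A := by rw [h4]
    _ = Aᵀ * Adᵀ * A := by rw [Matrix.transpose_mul]
    _ = A := by rw [hAsym, h1t]
  -- A A Ad = A
  have hAAAd : A * (A * Ad) = A := by
    calc A * (A * Ad) = A * (A * Ad)ᵀ := by rw [h3]
    _ = A * (Adᵀ * Aᵀ) := by rw [Matrix.transpose_mul]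
    _ = A * Adᵀ * A := by rw [hAsym, Matrix.mul_assoc]
    _ = A := h1t
  -- key invariant
  have key : ∀ k, Ad * A * N k = N k ∧ N k * (A * Ad) = N k := by
    intro k
    induction k with
    | zero =>
      rw [hN0]
      constructor
      · rw [Matrix.mul_smul, hAdAA]
      · rw [Matrix.smul_mul, hAAAd]
    | succ k ih =>
      obtain ⟨ihl, ihr⟩ := ih
      rw [hNrec k]
      constructor
      · rw [Matrix.mul_sub, Matrix.mul_smul, ihl, ← Matrix.mul_assoc,
          ← Matrix.mul_assoc, ihl]
      · rw [Matrix.sub_mul, Matrix.smul_mul, ihr, Matrix.mul_assoc,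
          Matrix.mul_assoc, ihr, ← Matrix.mul_assoc]
  intro k
  obtain ⟨ihl, ihr⟩ := key k
  rw [hNrec k]
  have expand : (Ad - N k) * A * (Ad - N k)
      = Ad * A * Ad - Ad * A * N k - N k * (A * Ad) + N k * A * N k := by
    simp only [Matrix.sub_mul, Matrix.mul_sub, Matrix.mul_assoc]
    abel
  rw [expand, h2, ihl, ihr]
  module
end

section
/- Let A be an m×m real symmetric positive semidefinite matrix with Moore–Penrose inverse A†, let α be a real scalar, and define the Newton–Raphson iterates A₀ = α A, A_{k+1} = 2 A_k − A_k A A_k. Then for every k ≥ 0 one has the exact identity A − A A_{k+1} A = (A A† − A A_k)(A − A A_k A), and consequently ‖A − A A_{k+1} A‖ ≤ ‖A A† − A A_k‖ · ‖A − A A_k A‖ in spectral norm. -/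
open Matrix Filter

/-- The exact identity
`A - A N_{k+1} A = (A Ad - A N_k)(A - A N_k A)` holds, and consequently
`‖A - A N_{k+1} A‖ ≤ ‖A Ad - A N_k‖ ⬝ ‖A - A N_k A‖` in spectral norm. -/
theorem newton_raphson_residual_recursion {m : ℕ}
    (A Ad : Matrix (Fin m) (Fin m) ℝ)
    (hA : A.PosSemidef)
    (hMP : IsMoorePenroseInv A Ad)
    (α : ℝ) (N : ℕ → Matrix (Fin m) (Fin m) ℝ)
    (hN0 : N 0 = α • A)
    (hNrec : ∀ k, N (k + 1) = (2 : ℝ) • N k - N k * A * N k) :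
    ∀ k, A - A * N (k + 1) * A = (A * Ad - A * N k) * (A - A * N k * A) ∧
      specNorm (A - A * N (k + 1) * A) ≤
        specNorm (A * Ad - A * N k) * specNorm (A - A * N k * A) := by
  intro k
  have h1 : A * Ad * A = A := hMP.1
  have key : A - A * N (k + 1) * A = (A * Ad - A * N k) * (A - A * N k * A) := by
    rw [hNrec k]
    have expand : (A * Ad - A * N k) * (A - A * N k * A)
        = A * Ad * A - A * Ad * A * N k * A - A * N k * A + A * N k * A * N k * A := by
      noncomm_ring
    rw [expand, h1]
    simp only [smul_sub, Matrix.sub_mul, Matrix.mul_sub, Matrix.smul_mul, Matrix.mul_smul,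
      Matrix.mul_assoc, smul_mul_assoc, mul_smul_comm, smul_smul]
    module
  refine ⟨key, ?_⟩
  rw [key]
  simp only [specNorm, _root_.map_mul]
  exact norm_mul_le _ _
end

section
/- Let A be a nonzero m×m real symmetric positive semidefinite matrix with Moore–Penrose inverse A†, and let λ_max denote its largest eigenvalue. If the real scalar α satisfies 0 < α < 2/λ_max², then the spectral norm satisfies ‖A A† − α A²‖ < 1; i.e. any sufficiently small positive α makes the Newton–Raphson initialization A₀ = α A satisfy the contraction condition ‖A A† − A A₀‖ < 1. -/
/-!
Diagonalize `A = U D Uᵀ` with `U` orthogonal and `D = diag λ`. The Penrose equations determine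
`A†` uniquely and `U diag(λ⁻¹) Uᵀ` satisfies them (with `0⁻¹ = 0`), so
`A A† - α A² = U diag(λᵢ λᵢ⁻¹ - α λᵢ²) Uᵀ`. Orthogonal conjugation preserves the spectral norm, and
the norm of a diagonal matrix is its largest entry in absolute value. Each entry is `0` when
`λᵢ = 0` and `1 - α λᵢ²` otherwise, where `0 < α λᵢ² ≤ α λ_max² < 2`.
-/

open Matrix

open scoped Matrix.Norms.L2Operator

theorem Unitary.norm_conjStarAlgAut {S R : Type*} [NormedRing R] [StarRing R] [CStarRing R]
    [SMul S R] [IsScalarTower S R R] [SMulCommClass S R R] (u : unitary R) (x : R) :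
    ‖conjStarAlgAut S R u x‖ = ‖x‖ := by
  rw [conjStarAlgAut_apply, ← Unitary.coe_star, CStarRing.norm_mul_coe_unitary,
    CStarRing.norm_coe_unitary_mul]

namespace IsMoorePenroseInv

theorem unique {m n : ℕ} {A : Matrix (Fin m) (Fin n) ℝ} {X Y : Matrix (Fin n) (Fin m) ℝ}
    (hX : IsMoorePenroseInv A X) (hY : IsMoorePenroseInv A Y) : X = Y := by
  obtain ⟨hAXA, hXAX, hAX, hXA⟩ := hX
  obtain ⟨hAYA, hYAY, hAY, hYA⟩ := hY
  have hX_eq : X = X * A * Y := calc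
    X = X * (A * X)ᵀ := by rw [hAX, ← Matrix.mul_assoc, hXAX]
    _ = X * ((A * X)ᵀ * (A * Y)ᵀ) := by
      rw [← transpose_mul, ← Matrix.mul_assoc (A * Y), hAYA]
    _ = X * A * Y := by
      rw [hAX, hAY, ← Matrix.mul_assoc, ← Matrix.mul_assoc X A X, hXAX, Matrix.mul_assoc]
  have hY_eq : Y = X * A * Y := calc
    Y = (Y * A)ᵀ * Y := by rw [hYA, hYAY]
    _ = ((X * A)ᵀ * (Y * A)ᵀ) * Y := by
      rw [← transpose_mul, Matrix.mul_assoc Y A, ← Matrix.mul_assoc A X A, hAXA]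
    _ = X * A * Y := by
      rw [hXA, hYA, Matrix.mul_assoc (X * A) (Y * A) Y, hYAY]
  exact hX_eq.trans hY_eq.symm

theorem diagonal {m : ℕ} (d : Fin m → ℝ) : IsMoorePenroseInv (diagonal d) (diagonal d⁻¹) := by
  refine ⟨?_, ?_, ?_, ?_⟩ <;> simp only [diagonal_mul_diagonal, diagonal_transpose]
  · congr 1; funext i; exact mul_inv_mul_cancel (d i)
  · congr 1; funext i; simpa using mul_inv_mul_cancel (d i)⁻¹

theorem map_conjStarAlgAut {m : ℕ} {A X : Matrix (Fin m) (Fin m) ℝ} (h : IsMoorePenroseInv A X)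
    (u : unitary (Matrix (Fin m) (Fin m) ℝ)) :
    IsMoorePenroseInv (Unitary.conjStarAlgAut ℝ _ u A) (Unitary.conjStarAlgAut ℝ _ u X) := by
  obtain ⟨hAXA, hXAX, hAX, hXA⟩ := h
  simp only [IsMoorePenroseInv, ← map_mul, ← conjTranspose_eq_transpose_of_trivial,
    ← star_eq_conjTranspose, ← map_star] at *
  exact ⟨by rw [hAXA], by rw [hXAX], by rw [hAX], by rw [hXA]⟩

end IsMoorePenroseInv

theorem abs_mul_inv_sub_mul_mul_self_lt_one {x l α : ℝ} (hx : 0 ≤ x) (hxl : x ≤ l) (hα0 : 0 < α)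
    (hα : α < 2 / l ^ 2) : |x * x⁻¹ - α * (x * x)| < 1 := by
  rcases hx.eq_or_lt with rfl | hx
  · simp
  have hαx : α * (x * x) < 2 := calc
    α * (x * x) ≤ α * l ^ 2 := by gcongr; nlinarith
    _ < 2 := by rwa [← lt_div_iff₀ (pow_pos (hx.trans_le hxl) 2)]
  rw [mul_inv_cancel₀ hx.ne', abs_lt]
  constructor <;> nlinarith [mul_pos hα0 (mul_pos hx hx)]

theorem newton_raphson_small_alpha_contraction_general {m : ℕ}
    (A Ad : Matrix (Fin m) (Fin m) ℝ)
    (hA : A.PosSemidef)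
    (hMP : IsMoorePenroseInv A Ad)
    (lmax : ℝ) (hlmax : lmax = ⨆ i, hA.1.eigenvalues i)
    (α : ℝ) (hα0 : 0 < α) (hα : α < 2 / lmax ^ 2) :
    specNorm (A * Ad - α • (A * A)) < 1 := by
  set φ := Unitary.conjStarAlgAut ℝ _ hA.1.eigenvectorUnitary
  set d := hA.1.eigenvalues
  have hA_eq : A = φ (diagonal d) := hA.1.spectral_theorem
  have hAd : Ad = φ (diagonal d⁻¹) :=
    hMP.unique (hA_eq ▸ (IsMoorePenroseInv.diagonal d).map_conjStarAlgAut _)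
  have hM : A * Ad - α • (A * A) = φ (diagonal fun i => d i * (d i)⁻¹ - α * (d i * d i)) := by
    rw [hA_eq, hAd, ← map_mul, ← map_mul, ← map_smul, ← map_sub, diagonal_mul_diagonal,
      diagonal_mul_diagonal, ← diagonal_smul, diagonal_sub]
    rfl
  have hd_le (i) : d i ≤ lmax := hlmax ▸ le_ciSup (Set.finite_range d).bddAbove i
  rw [specNorm, ← cstar_norm_def, hM, Unitary.norm_conjStarAlgAut, l2_opNorm_diagonal,
    pi_norm_lt_iff one_pos]
  exact fun i => abs_mul_inv_sub_mul_mul_self_lt_one (hA.eigenvalues_nonneg i) (hd_le i) hα0 hα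

/-- If `A` is a nonzero real symmetric positive semidefinite matrix with
Moore–Penrose inverse `Ad` and largest eigenvalue `λmax`, and `0 < α < 2 / λmax²`, then
`‖A Ad - α A²‖ < 1` in spectral norm, i.e. the initialization `A₀ = α A` satisfies the
contraction condition. -/
theorem newton_raphson_small_alpha_contraction {m : ℕ}
    (A Ad : Matrix (Fin m) (Fin m) ℝ)
    (hA : A.PosSemidef) (hA0 : A ≠ 0)
    (hMP : IsMoorePenroseInv A Ad)
    (lmax : ℝ) (hlmax : lmax = ⨆ i, hA.1.eigenvalues i)
    (α : ℝ) (hα0 : 0 < α) (hα : α < 2 / lmax ^ 2) :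
    specNorm (A * Ad - α • (A * A)) < 1 :=
  newton_raphson_small_alpha_contraction_general A Ad hA hMP lmax hlmax α hα0 hα
end

section
/- If G is an n×n real symmetric positive semidefinite matrix, then the matrix obtained by applying the exponential function entrywise, i.e. the matrix with entries exp(G_{ij}), is also symmetric positive semidefinite. -/
/-!
Since `exp z = ∑ zᵏ / k!` has nonnegative coefficients, the entrywise exponential of `G` is a
limit of nonnegative combinations of the Hadamard powers `G ⊙ ⋯ ⊙ G`. These are positive
semidefinite by the Schur product theorem, and positive semidefiniteness is a closed condition.
-/

open Matrix

section Closed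

variable {R ι : Type*} [Ring R] [PartialOrder R] [StarRing R] [TopologicalSpace R]
  [IsTopologicalRing R] [ContinuousStar R] [ClosedIciTopology R] [T2Space R]

theorem Matrix.isClosed_setOf_posSemidef : IsClosed {A : Matrix ι ι R | A.PosSemidef} := by
  simp only [PosSemidef, Set.ofPred_and, Set.ofPred_forall]
  refine .inter (isClosed_eq (by fun_prop) continuous_id) (isClosed_iInter fun x => ?_)
  exact isClosed_Ici.preimage (by unfold Finsupp.sum; fun_prop)

end Closed

section PowerSeries

variable {𝕜 ι : Type*} [RCLike 𝕜] [Fintype ι] {A : Matrix ι ι 𝕜}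

open scoped ComplexOrder

theorem Matrix.PosSemidef.map_pow (hA : A.PosSemidef) (k : ℕ) : (A.map (· ^ k)).PosSemidef := by
  induction k with
  | zero =>
    convert posSemidef_vecMulVec_self_star (1 : ι → 𝕜) using 1
    ext
    simp [vecMulVec]
  | succ k ih =>
    convert ih.hadamard hA using 1
    ext
    simp [pow_succ]

theorem Matrix.PosSemidef.map_of_hasSum {c : ℕ → ℝ} (hc : 0 ≤ c) {f : 𝕜 → 𝕜}
    (hf : ∀ z, HasSum (fun k => c k • z ^ k) (f z)) (hA : A.PosSemidef) :
    (A.map f).PosSemidef := by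
  have hsum : HasSum (fun k => c k • A.map (· ^ k)) (A.map f) :=
    Pi.hasSum.2 fun i => Pi.hasSum.2 fun j => hf (A i j)
  exact isClosed_setOf_posSemidef.mem_of_tendsto hsum.tendsto_sum_nat <|
    .of_forall fun N => posSemidef_sum _ fun k _ => (hA.map_pow k).smul (hc k)

end PowerSeries

/-- If `G` is a real symmetric positive semidefinite matrix, then the
entrywise exponential of `G`, the matrix with entries `exp (G i j)`, is also symmetric
positive semidefinite. -/
theorem entrywise_exp_posSemidef {n : ℕ}
    (G : Matrix (Fin n) (Fin n) ℝ) (hG : G.PosSemidef) :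
    (Matrix.of fun i j => Real.exp (G i j))ᵀ = (Matrix.of fun i j => Real.exp (G i j)) ∧
      (Matrix.of fun i j => Real.exp (G i j)).PosSemidef := by
  have hexp : (G.map Real.exp).PosSemidef :=
    hG.map_of_hasSum (fun k => by positivity) fun z =>
      Real.exp_eq_exp_ℝ ▸ NormedSpace.exp_series_hasSum_exp' z
  exact ⟨hexp.isHermitian, hexp⟩
end

section
/- Let S be an n×n real positive semidefinite matrix written in block form S = [[A, B], [Bᵀ, C]] with A an m×m block, and let Ŝ = [[A],[Bᵀ]] A† [A, B] be its Nyström approximation. Then S − Ŝ = [[0, 0], [0, C − Bᵀ A† B]]; in particular S − Ŝ is positive semidefinite, so the Nyström approximation satisfies Ŝ ⪯ S and Ŝ is itself positive semidefinite. -/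
/-!
Positivity of `S` forces `ker A ⊆ ker Bᵀ`: if `A v = 0` then `(v, 0)ᵀ S (v, 0) = 0`, so
`S (v, 0) = 0`. Applied to the columns of `1 - A† A` and of `1 - A†ᵀ A`, this gives
`Bᵀ A† A = Bᵀ` and `A A† B = B`. Hence `Ŝ = S Z` for the idempotent `Z = [[1, A† B], [0, 0]]`,
and since `S Z` is symmetric, both `Ŝ = Zᵀ S Z` and `S - Ŝ = (1 - Z)ᵀ S (1 - Z)` are positive
semidefinite.
-/

open Matrix

theorem Matrix.fromBlocks_sub {l m n o α : Type*} [Sub α]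
    (A A' : Matrix n l α) (B B' : Matrix n m α) (C C' : Matrix o l α) (D D' : Matrix o m α) :
    fromBlocks A B C D - fromBlocks A' B' C' D' = fromBlocks (A - A') (B - B') (C - C') (D - D') := by
  ext (i | i) (j | j) <;> rfl

theorem Matrix.IsHermitian.mul_conjTranspose_mul_eq_self {𝕜 m : Type*} [RCLike 𝕜] [Fintype m]
    {A G : Matrix m m 𝕜} (hA : A.IsHermitian) (hG : A * G * A = A) : A * Gᴴ * A = A := by
  simpa only [conjTranspose_mul, hA.eq, Matrix.mul_assoc] using congrArg Matrix.conjTranspose hG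

open scoped ComplexOrder

namespace Matrix.PosSemidef

variable {𝕜 m n p : Type*} [RCLike 𝕜] {A : Matrix m m 𝕜} {B : Matrix m n 𝕜} {C : Matrix n n 𝕜}

theorem isHermitian₁₁ (hS : (fromBlocks A B Bᴴ C).PosSemidef) : A.IsHermitian :=
  (isHermitian_fromBlocks_iff.mp hS.isHermitian).1

variable [Fintype m] [Fintype n]

theorem mul_eq_zero_of_conjTranspose_mul_mul_eq_zero {S : Matrix n n 𝕜} (hS : S.PosSemidef)
    {X : Matrix n p 𝕜} (h : Xᴴ * S * X = 0) : S * X = 0 := by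
  classical
  open scoped MatrixOrder in
  obtain ⟨L, rfl⟩ := CStarAlgebra.nonneg_iff_eq_star_mul_self.mp hS.nonneg
  have hLX : L * X = 0 := by
    rw [← conjTranspose_mul_self_eq_zero, conjTranspose_mul, ← h, star_eq_conjTranspose]
    simp only [Matrix.mul_assoc]
  rw [Matrix.mul_assoc, hLX, Matrix.mul_zero]

theorem mul_of_isIdempotentElem {S Z : Matrix n n 𝕜} (hS : S.PosSemidef)
    (hZ : IsIdempotentElem Z) (hSZ : (S * Z).IsHermitian) : (S * Z).PosSemidef := by
  have h : S * Z = Zᴴ * S * Z := calc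
    S * Z = (S * Z)ᴴ * Z := by rw [hSZ.eq, Matrix.mul_assoc, hZ.eq]
    _ = Zᴴ * S * Z := by rw [conjTranspose_mul, hS.isHermitian.eq]
  exact h ▸ hS.conjTranspose_mul_mul_same Z

theorem sub_mul_of_isIdempotentElem [DecidableEq n] {S Z : Matrix n n 𝕜} (hS : S.PosSemidef)
    (hZ : IsIdempotentElem Z) (hSZ : (S * Z).IsHermitian) : (S - S * Z).PosSemidef := by
  have h := hS.mul_of_isIdempotentElem hZ.one_sub
    (by rw [Matrix.mul_sub, Matrix.mul_one]; exact hS.isHermitian.sub hSZ)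
  rwa [Matrix.mul_sub, Matrix.mul_one] at h

theorem conjTranspose_mul_eq_zero_of_mul_eq_zero (hS : (fromBlocks A B Bᴴ C).PosSemidef)
    {M : Matrix m p 𝕜} (hM : A * M = 0) : Bᴴ * M = 0 := by
  have h := hS.mul_eq_zero_of_conjTranspose_mul_mul_eq_zero
    (X := fromBlocks M (0 : Matrix m p 𝕜) (0 : Matrix n p 𝕜) (0 : Matrix n p 𝕜))
    (by simp [fromBlocks_conjTranspose, fromBlocks_multiply, Matrix.mul_assoc, hM])
  rw [fromBlocks_multiply, ← fromBlocks_zero, fromBlocks_inj] at h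
  simpa using h.2.2.1

variable [DecidableEq m]

theorem conjTranspose_mul_mul_eq_of_mul_mul_eq (hS : (fromBlocks A B Bᴴ C).PosSemidef)
    {G : Matrix m m 𝕜} (hG : A * G * A = A) : Bᴴ * G * A = Bᴴ := by
  have h := hS.conjTranspose_mul_eq_zero_of_mul_eq_zero (M := 1 - G * A)
    (by rw [Matrix.mul_sub, Matrix.mul_one, ← Matrix.mul_assoc, hG, sub_self])
  rwa [Matrix.mul_sub, Matrix.mul_one, sub_eq_zero, eq_comm, ← Matrix.mul_assoc] at h

theorem mul_mul_eq_of_mul_mul_eq (hS : (fromBlocks A B Bᴴ C).PosSemidef)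
    {G : Matrix m m 𝕜} (hG : A * G * A = A) : A * G * B = B := by
  have hA := hS.isHermitian₁₁
  simpa only [conjTranspose_mul, conjTranspose_conjTranspose, hA.eq, Matrix.mul_assoc] using
    congrArg Matrix.conjTranspose
      (hS.conjTranspose_mul_mul_eq_of_mul_mul_eq (hA.mul_conjTranspose_mul_eq_self hG))

theorem isHermitian_conjTranspose_mul_mul (hS : (fromBlocks A B Bᴴ C).PosSemidef)
    {G : Matrix m m 𝕜} (hG : A * G * A = A) : (Bᴴ * G * B).IsHermitian := by
  have hG' := hS.isHermitian₁₁.mul_conjTranspose_mul_eq_self hG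
  calc (Bᴴ * G * B)ᴴ = Bᴴ * Gᴴ * (A * G * B) := by
        rw [hS.mul_mul_eq_of_mul_mul_eq hG]
        simp only [conjTranspose_mul, conjTranspose_conjTranspose, Matrix.mul_assoc]
    _ = Bᴴ * G * B := by
        rw [← Matrix.mul_assoc, ← Matrix.mul_assoc, hS.conjTranspose_mul_mul_eq_of_mul_mul_eq hG']

end Matrix.PosSemidef

/-- For a positive semidefinite `S = [[A, B], [Bᵀ, C]]` with Nyström
approximation `Ŝ = [[A],[Bᵀ]] A† [A, B]`, one has
`S - Ŝ = [[0,0],[0, C - Bᵀ A† B]]`; in particular `S - Ŝ` is positive semidefinite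
(so `Ŝ ⪯ S`) and `Ŝ` is itself positive semidefinite. -/
theorem nystrom_approximation_residual {m p : ℕ}
    (A Ad : Matrix (Fin m) (Fin m) ℝ)
    (B : Matrix (Fin m) (Fin p) ℝ) (C : Matrix (Fin p) (Fin p) ℝ)
    (hS : (Matrix.fromBlocks A B Bᵀ C).PosSemidef)
    (hMP : IsMoorePenroseInv A Ad) :
    Matrix.fromBlocks A B Bᵀ C -
        Matrix.fromBlocks (A * Ad * A) (A * Ad * B) (Bᵀ * Ad * A) (Bᵀ * Ad * B) =
      Matrix.fromBlocks 0 0 0 (C - Bᵀ * Ad * B) ∧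
    (Matrix.fromBlocks A B Bᵀ C -
        Matrix.fromBlocks (A * Ad * A) (A * Ad * B) (Bᵀ * Ad * A) (Bᵀ * Ad * B)).PosSemidef ∧
    (Matrix.fromBlocks (A * Ad * A) (A * Ad * B) (Bᵀ * Ad * A) (Bᵀ * Ad * B)).PosSemidef := by
  obtain ⟨hAAdA, -⟩ := hMP
  rw [← conjTranspose_eq_transpose_of_trivial] at hS ⊢
  have hAAdB := hS.mul_mul_eq_of_mul_mul_eq hAAdA
  rw [hAAdA, hAAdB, hS.conjTranspose_mul_mul_eq_of_mul_mul_eq hAAdA]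
  set Z := fromBlocks (1 : Matrix (Fin m) (Fin m) ℝ) (Ad * B) 0 (0 : Matrix (Fin p) (Fin p) ℝ)
  have hSZ : fromBlocks A B Bᴴ (Bᴴ * Ad * B) = fromBlocks A B Bᴴ C * Z := by
    simp [Z, fromBlocks_multiply, ← Matrix.mul_assoc, hAAdB]
  have hZ : IsIdempotentElem Z := by
    simp [IsIdempotentElem, Z, fromBlocks_multiply]
  have hSZ_herm : (fromBlocks A B Bᴴ C * Z).IsHermitian :=
    hSZ ▸ hS.isHermitian₁₁.fromBlocks rfl (hS.isHermitian_conjTranspose_mul_mul hAAdA)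
  refine ⟨by simp [fromBlocks_sub], ?_, ?_⟩
  · exact hSZ ▸ hS.sub_mul_of_isIdempotentElem hZ hSZ_herm
  · exact hSZ ▸ hS.mul_of_isIdempotentElem hZ hSZ_herm
end

section
/- Let S be an n×n real positive semidefinite matrix written in block form S = [[A, B], [Bᵀ, C]] with A an m×m block, and let Ŝ = [[A],[Bᵀ]] A† [A, B] be its Nyström approximation. If rank(S) = rank(A), then the Nyström approximation is exact: S = Ŝ. -/
/-!
Positive semidefiniteness of `S = [[A, B], [Bᴴ, C]]` forces `ker A ⊆ ker Bᴴ`: if `A v = 0` then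
`(v, 0)ᴴ S (v, 0) = 0`, so `S (v, 0) = (0, Bᴴ v)` vanishes. For any generalized inverse `X`
(`A X A = A`) this gives `A X B = B` and `Bᴴ X A = Bᴴ`, and hence the factorization
`S = L · diag(A, C - Bᴴ X B) · U` with unitriangular `L` and `U`. So
`rank S = rank A + rank (C - Bᴴ X B)`, and `rank S = rank A` forces the Schur complement
`C - Bᴴ X B` to vanish.
-/

open Matrix

theorem Submodule.finrank_prod {K M N : Type*} [DivisionRing K] [AddCommGroup M] [Module K M]
    [AddCommGroup N] [Module K N] (p : Submodule K M) (q : Submodule K N)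
    [FiniteDimensional K p] [FiniteDimensional K q] :
    Module.finrank K (p.prod q) = Module.finrank K p + Module.finrank K q := by
  have := LinearMap.finrank_range_of_inj (f := p.subtype.prodMap q.subtype)
    (p.injective_subtype.prodMap q.injective_subtype)
  rwa [LinearMap.range_prodMap, Submodule.range_subtype, Submodule.range_subtype,
    Module.finrank_prod] at this

namespace Matrix

variable {l m n o R : Type*}

section Rank

variable [Field R]

theorem rank_eq_zero_iff [Fintype n] {A : Matrix m n R} : A.rank = 0 ↔ A = 0 := by
  classical
  rw [rank, Submodule.finrank_eq_zero, LinearMap.range_eq_bot, ← toLin'_apply',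
    LinearEquiv.map_eq_zero_iff]

theorem rank_fromBlocks_zero_zero [Fintype l] [Fintype m] [Fintype n] [Fintype o]
    (A : Matrix l m R) (D : Matrix n o R) : (fromBlocks A 0 0 D).rank = A.rank + D.rank := by
  let e := LinearEquiv.sumArrowLequivProdArrow m o R R
  let e' := LinearEquiv.sumArrowLequivProdArrow l n R R
  have hmul : (fromBlocks A 0 0 D).mulVecLin =
      e'.symm.toLinearMap ∘ₗ A.mulVecLin.prodMap D.mulVecLin ∘ₗ e.toLinearMap := by
    ext v i
    cases i <;> simp [e, e', fromBlocks_mulVec] <;> rfl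
  rw [rank, hmul, LinearMap.range_comp, LinearMap.range_comp, LinearEquiv.range,
    Submodule.map_top, LinearMap.range_prodMap, LinearEquiv.finrank_map_eq,
    Submodule.finrank_prod, rank, rank]

end Rank

section KernelInclusion

variable [Ring R] [Fintype l] {A : Matrix m l R} {B' : Matrix n l R}

theorem mul_eq_zero_of_forall_mulVec_eq_zero [Fintype o] {P : Matrix l o R}
    (hker : ∀ v, A *ᵥ v = 0 → B' *ᵥ v = 0) (hP : A * P = 0) : B' * P = 0 :=
  ext_iff_mulVec.2 fun v => by
    rw [← mulVec_mulVec, hker _ (by rw [mulVec_mulVec, hP, zero_mulVec]), zero_mulVec]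

theorem mul_mul_eq_of_forall_mulVec_eq_zero [Fintype m] [DecidableEq l] {X : Matrix l m R}
    (hker : ∀ v, A *ᵥ v = 0 → B' *ᵥ v = 0) (hX : A * X * A = A) : B' * X * A = B' := by
  have h : B' * (1 - X * A) = 0 := mul_eq_zero_of_forall_mulVec_eq_zero hker <| by
    rw [Matrix.mul_sub, Matrix.mul_one, ← Matrix.mul_assoc, hX, sub_self]
  rwa [Matrix.mul_sub, Matrix.mul_one, sub_eq_zero, eq_comm, ← Matrix.mul_assoc] at h

end KernelInclusion

section SchurComplement

variable [Fintype l] [Fintype n] [DecidableEq l] [DecidableEq n]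
  {A X : Matrix l l R} {B : Matrix l n R} {B' : Matrix n l R}

theorem fromBlocks_eq_mul_fromBlocks_zero_zero_mul [Ring R] (C : Matrix n n R)
    (hB : A * X * B = B) (hB' : B' * X * A = B') :
    fromBlocks A B B' C =
      fromBlocks 1 0 (B' * X) 1 * fromBlocks A 0 0 (C - B' * X * B) * fromBlocks 1 (X * B) 0 1 := by
  simp only [fromBlocks_multiply, Matrix.one_mul, Matrix.mul_one, Matrix.zero_mul,
    Matrix.mul_zero, add_zero, zero_add]
  rw [← Matrix.mul_assoc A, hB, hB', ← Matrix.mul_assoc B' X B, add_sub_cancel]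

theorem rank_fromBlocks_eq_rank_add_rank_sub [Field R] (C : Matrix n n R)
    (hB : A * X * B = B) (hB' : B' * X * A = B') :
    (fromBlocks A B B' C).rank = A.rank + (C - B' * X * B).rank := by
  rw [fromBlocks_eq_mul_fromBlocks_zero_zero_mul C hB hB', rank_mul_eq_left_of_isUnit_det,
    rank_mul_eq_right_of_isUnit_det, rank_fromBlocks_zero_zero] <;> simp

theorem eq_mul_mul_of_rank_fromBlocks_eq [Field R] {C : Matrix n n R}
    (hB : A * X * B = B) (hB' : B' * X * A = B') (hrank : (fromBlocks A B B' C).rank = A.rank) :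
    C = B' * X * B := by
  rwa [rank_fromBlocks_eq_rank_add_rank_sub C hB hB', add_eq_left, rank_eq_zero_iff,
    sub_eq_zero] at hrank

end SchurComplement

namespace PosSemidef

open scoped ComplexOrder

variable {𝕜 : Type*} [RCLike 𝕜] [Fintype l] [Fintype n]

theorem fromBlocks_mulVec₂₁_eq_zero {A : Matrix l l 𝕜} {B : Matrix l n 𝕜} {B' : Matrix n l 𝕜}
    {C : Matrix n n 𝕜} (hS : (fromBlocks A B B' C).PosSemidef) {v : l → 𝕜} (hv : A *ᵥ v = 0) :
    B' *ᵥ v = 0 := by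
  have hSv : fromBlocks A B B' C *ᵥ Sum.elim v 0 = Sum.elim (0 : l → 𝕜) (B' *ᵥ v) := by
    simp [fromBlocks_mulVec, hv]
  have h := (hS.dotProduct_mulVec_zero_iff (Sum.elim v 0)).1 <| by
    simp [hSv, dotProduct, Fintype.sum_sum_type]
  funext i
  simpa [hSv] using congrFun h (Sum.inr i)

variable [DecidableEq l] [DecidableEq n]

theorem fromBlocks_eq_of_rank_eq {A X : Matrix l l 𝕜} {B : Matrix l n 𝕜} {C : Matrix n n 𝕜}
    (hS : (fromBlocks A B Bᴴ C).PosSemidef) (hX : A * X * A = A)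
    (hrank : (fromBlocks A B Bᴴ C).rank = A.rank) :
    fromBlocks A B Bᴴ C = fromBlocks (A * X * A) (A * X * B) (Bᴴ * X * A) (Bᴴ * X * B) := by
  have hker : ∀ v, A *ᵥ v = 0 → Bᴴ *ᵥ v = 0 := fun _ => hS.fromBlocks_mulVec₂₁_eq_zero
  have hA : Aᴴ = A := (isHermitian_fromBlocks_iff.1 hS.isHermitian).1
  have hB' : Bᴴ * X * A = Bᴴ := mul_mul_eq_of_forall_mulVec_eq_zero hker hX
  have hB : A * X * B = B := by
    -- `Xᴴ` is again a generalized inverse of the Hermitian `A`; take adjoints.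
    have hX' : A * Xᴴ * A = A := by
      simpa [Matrix.mul_assoc, hA] using congrArg (·ᴴ) hX
    simpa [Matrix.mul_assoc, hA] using
      congrArg (·ᴴ) (mul_mul_eq_of_forall_mulVec_eq_zero hker hX')
  rw [hX, hB, hB', ← eq_mul_mul_of_rank_fromBlocks_eq hB hB' hrank]

end PosSemidef

end Matrix

/-- If `S = [[A, B], [Bᵀ, C]]` is positive semidefinite and
`rank S = rank A`, then the Nyström approximation is exact:
`S = [[A],[Bᵀ]] A† [A, B]`. -/
theorem nystrom_approximation_exact_of_rank_eq {m p : ℕ}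
    (A Ad : Matrix (Fin m) (Fin m) ℝ)
    (B : Matrix (Fin m) (Fin p) ℝ) (C : Matrix (Fin p) (Fin p) ℝ)
    (hS : (Matrix.fromBlocks A B Bᵀ C).PosSemidef)
    (hMP : IsMoorePenroseInv A Ad)
    (hrank : (Matrix.fromBlocks A B Bᵀ C).rank = A.rank) :
    Matrix.fromBlocks A B Bᵀ C =
      Matrix.fromBlocks (A * Ad * A) (A * Ad * B) (Bᵀ * Ad * A) (Bᵀ * Ad * B) := by
  rw [← conjTranspose_eq_transpose_of_trivial] at hS hrank ⊢
  exact hS.fromBlocks_eq_of_rank_eq hMP.1 hrank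
end

section
/- Let S be an n×n real positive semidefinite matrix written in block form S = [[A, B], [Bᵀ, C]] with A an m×m block, and let Ŝ = [[A],[Bᵀ]] A† [A, B] be its Nyström approximation. Then rank(Ŝ) = rank(A); in particular rank(Ŝ) ≤ m, so the Nyström approximation has rank at most the size of the sampled block. -/
open Matrix

/-!
Writing `Ŝ = [[A],[Bᵀ]] A† [A, B]` shows `rank Ŝ ≤ rank A† ≤ rank A`, the last step because
`A† = A† A A†`. Conversely the top-left block of `Ŝ` is `A A† A = A`, and a block has rank at
most that of the whole matrix.
-/

namespace Matrix

variable {R : Type*} {l m n o : Type*}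

theorem fromRows_mul_mul_fromCols [Semiring R] [Fintype n] [Fintype o] (X : Matrix l n R)
    (Y : Matrix m n R) (M : Matrix n o R) (Z : Matrix o l R) (W : Matrix o m R) :
    fromRows X Y * M * fromCols Z W =
      fromBlocks (X * M * Z) (X * M * W) (Y * M * Z) (Y * M * W) := by
  rw [fromRows_mul, fromRows_mul_fromCols]

variable [CommRing R] [StrongRankCondition R]

theorem rank_mul_mul_le_middle [Fintype m] [Fintype n] [Fintype o] (X : Matrix l m R)
    (M : Matrix m n R) (Y : Matrix n o R) :
    (X * M * Y).rank ≤ M.rank :=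
  (rank_mul_le_left _ _).trans (rank_mul_le_right _ _)

theorem rank_le_rank_fromBlocks [Fintype m] [Fintype o] (A : Matrix l m R) (B : Matrix l o R)
    (C : Matrix n m R) (D : Matrix n o R) : A.rank ≤ (fromBlocks A B C D).rank :=
  rank_submatrix_le (fromBlocks A B C D) Sum.inl Sum.inl

theorem rank_le_of_mul_mul_eq_self [Fintype m] [Fintype n] {A : Matrix m n R} {G : Matrix n m R}
    (h : G * A * G = G) :
    G.rank ≤ A.rank :=
  h ▸ rank_mul_mul_le_middle G A G

end Matrix

theorem nystrom_approximation_rank_general {m p : ℕ}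
    (A Ad : Matrix (Fin m) (Fin m) ℝ)
    (B : Matrix (Fin m) (Fin p) ℝ)
    (hMP : IsMoorePenroseInv A Ad) :
    (Matrix.fromBlocks (A * Ad * A) (A * Ad * B) (Bᵀ * Ad * A) (Bᵀ * Ad * B)).rank = A.rank ∧
    (Matrix.fromBlocks (A * Ad * A) (A * Ad * B) (Bᵀ * Ad * A) (Bᵀ * Ad * B)).rank ≤ m := by
  obtain ⟨hAAdA, hAdAAd, -, -⟩ := hMP
  set Ŝ := fromBlocks (A * Ad * A) (A * Ad * B) (Bᵀ * Ad * A) (Bᵀ * Ad * B)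
  have hle : Ŝ.rank ≤ A.rank :=
    calc Ŝ.rank = (fromRows A Bᵀ * Ad * fromCols A B).rank := by rw [fromRows_mul_mul_fromCols]
      _ ≤ Ad.rank := rank_mul_mul_le_middle _ _ _
      _ ≤ A.rank := rank_le_of_mul_mul_eq_self hAdAAd
  have hge : A.rank ≤ Ŝ.rank :=
    calc A.rank = (A * Ad * A).rank := by rw [hAAdA]
      _ ≤ Ŝ.rank := rank_le_rank_fromBlocks _ _ _ _
  exact ⟨le_antisymm hle hge, hle.trans A.rank_le_width⟩

/-- The Nyström approximation `Ŝ = [[A],[Bᵀ]] A† [A, B]` of a positive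
semidefinite `S = [[A, B], [Bᵀ, C]]` satisfies `rank Ŝ = rank A`; in particular
`rank Ŝ ≤ m`. -/
theorem nystrom_approximation_rank {m p : ℕ}
    (A Ad : Matrix (Fin m) (Fin m) ℝ)
    (B : Matrix (Fin m) (Fin p) ℝ) (C : Matrix (Fin p) (Fin p) ℝ)
    (hS : (Matrix.fromBlocks A B Bᵀ C).PosSemidef)
    (hMP : IsMoorePenroseInv A Ad) :
    (Matrix.fromBlocks (A * Ad * A) (A * Ad * B) (Bᵀ * Ad * A) (Bᵀ * Ad * B)).rank = A.rank ∧
    (Matrix.fromBlocks (A * Ad * A) (A * Ad * B) (Bᵀ * Ad * A) (Bᵀ * Ad * B)).rank ≤ m :=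
  nystrom_approximation_rank_general A Ad B hMP
end
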